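/- Let B be a torsion-free group containing no subgroup isomorphic to Z², let φ ∈ Aut(B), and let G = B ⋊ Z. Then Z acts freely by conjugation on the set of conjugacy classes of nontrivial elements of B if and only if G contains no subgroup isomorphic to Z². -/

import Mathlib

/-!
A copy of `ℤ²` in a group is the same as a commuting pair `a, b` with `a ^ m * b ^ n = 1` only for
`m = n = 0`. In `B ⋊ ℤ` such a pair cannot lie in `B`, so one of them, say `a = (x, r)`, has
`r ≠ 0`; then `c = a ^ s * b ^ (-r)` (with `s` the `ℤ`-part of `b`) is a nontrivial element of `B`
commuting with `a`, i.e. `x φ^r(c) x⁻¹ = c`. Conversely, if `x φ^r(y) x⁻¹ = y` with `y ≠ 1` and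
`r ≠ 0`, then `(x, r)` and `y` commute and, as `y` has infinite order, generate a copy of `ℤ²`.
-/

/-- The semidirect product `B ⋊ ℤ` where `ℤ` acts via the automorphism `φ`. -/
abbrev SDP (B : Type*) [Group B] (φ : MulAut B) :=
  SemidirectProduct B (Multiplicative ℤ) (zpowersHom (MulAut B) φ)

open SemidirectProduct Multiplicative

section FreeAbelianPair

variable {G H : Type*} [Group G] [Group H]

def IsFreeAbelianPair (a b : G) : Prop :=
  Commute a b ∧ ∀ m n : ℤ, a ^ m * b ^ n = 1 → m = 0 ∧ n = 0

theorem IsFreeAbelianPair.symm {a b : G} (h : IsFreeAbelianPair a b) :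
    IsFreeAbelianPair b a :=
  ⟨h.1.symm, fun m n hmn => (h.2 n m (((h.1.zpow_zpow n m).eq).trans hmn)).symm⟩

theorem IsFreeAbelianPair.of_map {f : G →* H} (hf : Function.Injective f) {a b : G}
    (h : IsFreeAbelianPair (f a) (f b)) : IsFreeAbelianPair a b :=
  ⟨h.1.of_map hf, fun m n hmn =>
    h.2 m n (by rw [← map_zpow, ← map_zpow, ← map_mul, hmn, map_one])⟩

theorem exists_subgroup_mulEquiv_iff_exists_injective {A : Type*} [Group A] :
    (∃ K : Subgroup G, Nonempty (K ≃* A)) ↔ ∃ f : A →* G, Function.Injective f :=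
  ⟨fun ⟨K, ⟨e⟩⟩ => ⟨K.subtype.comp e.symm.toMonoidHom, K.subtype_injective.comp e.symm.injective⟩,
    fun ⟨f, hf⟩ => ⟨f.range, ⟨(MonoidHom.ofInjective hf).symm⟩⟩⟩

def Commute.zpowPairHom {a b : G} (h : Commute a b) : Multiplicative (ℤ × ℤ) →* G :=
  MonoidHom.mk' (fun z => a ^ (toAdd z).1 * b ^ (toAdd z).2) fun z w => by
    simp only [toAdd_mul, Prod.fst_add, Prod.snd_add, zpow_add]
    rw [mul_assoc, ← mul_assoc (a ^ (toAdd w).1), ((h.zpow_zpow _ _).eq)]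
    group

theorem exists_injective_hom_iff_exists_isFreeAbelianPair :
    (∃ f : Multiplicative (ℤ × ℤ) →* G, Function.Injective f) ↔
      ∃ a b : G, IsFreeAbelianPair a b := by
  constructor
  · rintro ⟨f, hf⟩
    have hf_apply (m n : ℤ) : f (ofAdd (m, n)) = f (ofAdd (1, 0)) ^ m * f (ofAdd (0, 1)) ^ n := by
      rw [← map_zpow f, ← map_zpow f, ← map_mul]
      congr 1
      exact toAdd.injective (by simp)
    refine ⟨_, _, (Commute.all (ofAdd (1, 0)) (ofAdd (0, 1))).map f, fun m n hmn => ?_⟩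
    rw [← hf_apply, ← map_one f] at hmn
    simpa using congrArg toAdd (hf hmn)
  · rintro ⟨a, b, hab, hind⟩
    refine ⟨hab.zpowPairHom, (injective_iff_map_eq_one _).2 fun z hz => ?_⟩
    obtain ⟨h1, h2⟩ := hind _ _ hz
    exact toAdd.injective (Prod.ext h1 h2)

theorem exists_subgroup_mulEquiv_int_prod_iff :
    (∃ K : Subgroup G, Nonempty (K ≃* Multiplicative (ℤ × ℤ))) ↔
      ∃ a b : G, IsFreeAbelianPair a b :=
  exists_subgroup_mulEquiv_iff_exists_injective.trans
    exists_injective_hom_iff_exists_isFreeAbelianPair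

end FreeAbelianPair

namespace SemidirectProduct

variable {N G : Type*} [Group N] [Group G] {φ : G →* MulAut N}

theorem right_zpow (a : N ⋊[φ] G) (n : ℤ) : (a ^ n).right = a.right ^ n :=
  map_zpow rightHom a n

theorem mul_inl_mul_inv (a : N ⋊[φ] G) (n : N) :
    a * inl n * a⁻¹ = inl (a.left * φ a.right n * a.left⁻¹) := by
  conv_lhs => rw [← inl_left_mul_inr_right a]
  simp only [map_mul, map_inv, inl_aut]
  group

theorem commute_inl_iff (a : N ⋊[φ] G) (n : N) :
    Commute a (inl n) ↔ a.left * φ a.right n * a.left⁻¹ = n := by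
  rw [commute_iff_eq, ← mul_inv_eq_iff_eq_mul, mul_inl_mul_inv, inl_inj]

theorem eq_inl_left_of_right_eq_one {a : N ⋊[φ] G} (h : a.right = 1) : a = inl a.left := by
  ext <;> simp [h]

end SemidirectProduct

section

variable {B : Type*} [Group B] {φ : MulAut B}

theorem isConj_of_commute_inl {a : SDP B φ} {y : B} (h : Commute a (inl y)) :
    IsConj ((φ ^ toAdd a.right) y) y :=
  isConj_iff.2 ⟨a.left, (commute_inl_iff a y).1 h⟩

theorem exists_isConj_of_isFreeAbelianPair {a b : SDP B φ} (h : IsFreeAbelianPair a b)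
    (ha : a.right ≠ 1) : ∃ y : B, y ≠ 1 ∧ IsConj ((φ ^ toAdd a.right) y) y := by
  set r := toAdd a.right
  set s := toAdd b.right
  set c := a ^ s * b ^ (-r) with hc_def
  have hc_right : c.right = 1 := by
    apply toAdd.injective
    simp only [c, mul_right, right_zpow, toAdd_mul, toAdd_zpow, toAdd_one, smul_eq_mul]
    ring
  have hc : c = inl c.left := eq_inl_left_of_right_eq_one hc_right
  refine ⟨c.left, fun hc_one => ?_, isConj_of_commute_inl ?_⟩
  · obtain ⟨-, hr⟩ := h.2 s (-r) (by rw [← hc_def, hc, hc_one, map_one])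
    exact ha (toAdd_eq_zero.1 (neg_eq_zero.1 hr))
  · rw [← hc]
    exact ((Commute.refl a).zpow_right s).mul_right (h.1.zpow_right (-r))

theorem isFreeAbelianPair_mk_inl {x y : B} {r : ℤ} (hr : r ≠ 0) (hy : ¬IsOfFinOrder y)
    (hxy : x * (φ ^ r) y * x⁻¹ = y) : IsFreeAbelianPair (⟨x, ofAdd r⟩ : SDP B φ) (inl y) := by
  refine ⟨(commute_inl_iff _ y).2 hxy, fun m n hmn => ?_⟩
  have hm : m = 0 := by
    simpa [right_zpow, hr] using congrArg (fun g : SDP B φ => toAdd g.right) hmn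
  subst hm
  rw [zpow_zero, one_mul, ← map_zpow, ← map_one inl, inl_inj, ← zpow_zero y] at hmn
  exact ⟨rfl, injective_zpow_iff_not_isOfFinOrder.2 hy hmn⟩

end

/-- If `B` is torsion-free and contains no subgroup isomorphic to `ℤ²`, then
`ℤ` acts freely by conjugation on conjugacy classes of nontrivial elements of
`B` iff `G = B ⋊ ℤ` contains no subgroup isomorphic to `ℤ²`. -/
theorem stmt8 (B : Type*) [Group B] (φ : MulAut B)
    (htf : ∀ g : B, g ≠ 1 → ¬IsOfFinOrder g)
    (hZ2 : ¬ ∃ H : Subgroup B, Nonempty (H ≃* Multiplicative (ℤ × ℤ))) :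
    (∀ y : B, y ≠ 1 → ∀ r : ℤ, r ≠ 0 → ¬ IsConj ((φ ^ r) y) y) ↔
      ¬ ∃ H : Subgroup (SDP B φ), Nonempty (H ≃* Multiplicative (ℤ × ℤ)) := by
  rw [exists_subgroup_mulEquiv_int_prod_iff] at hZ2 ⊢
  constructor
  · rintro hfree ⟨a, b, hab⟩
    by_cases ha : a.right = 1
    · by_cases hb : b.right = 1
      · rw [eq_inl_left_of_right_eq_one ha, eq_inl_left_of_right_eq_one hb] at hab
        exact hZ2 ⟨_, _, hab.of_map inl_injective⟩
      · obtain ⟨y, hy, hconj⟩ := exists_isConj_of_isFreeAbelianPair hab.symm hb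
        exact hfree y hy _ (by simpa using hb) hconj
    · obtain ⟨y, hy, hconj⟩ := exists_isConj_of_isFreeAbelianPair hab ha
      exact hfree y hy _ (by simpa using ha) hconj
  · rintro hnZ2 y hy r hr hconj
    obtain ⟨x, hx⟩ := isConj_iff.1 hconj
    exact hnZ2 ⟨_, _, isFreeAbelianPair_mk_inl hr (htf y hy) hx⟩
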